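/- arXiv:2206.10037 — 3 statements merged into one kernel-verified Lean document; each statement's English description precedes it below -/
import Mathlib

section
/- Let G be a finite abelian group and B = Bohr(Γ, ν) a Bohr set in G of rank r = |Γ| ≥ 1. Then for every real t with 0 < t ≤ 1, there exists ρ with t/2 ≤ ρ ≤ t such that the dilate B_ρ = Bohr(Γ, ρν) is regular. -/
open scoped Classical

/-- The Bohr set `Bohr(Γ, ν) = {x ∈ G : |γ(x) − 1| ≤ ν(γ) for all γ ∈ Γ}`. -/
noncomputable def bohrSet {G : Type*} [AddCommGroup G] [Fintype G]
    (Γ : Finset (AddChar G ℂ)) (ν : AddChar G ℂ → ℝ) : Finset G :=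
  Finset.univ.filter fun x => ∀ γ ∈ Γ, ‖γ x - 1‖ ≤ ν γ

/-- A Bohr set with frequency set `Γ` (of rank `r = |Γ|`) and width `ν` is regular if all
its dilates by `1 + δ`, `|δ| ≤ 1/(100r)`, have almost the same size as it. -/
def IsRegularBohr {G : Type*} [AddCommGroup G] [Fintype G]
    (Γ : Finset (AddChar G ℂ)) (ν : AddChar G ℂ → ℝ) : Prop :=
  ∀ δ : ℝ, |δ| ≤ 1 / (100 * Γ.card) →
    (1 - 100 * Γ.card * |δ|) * ((bohrSet Γ ν).card : ℝ) ≤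
        ((bohrSet Γ (fun γ => (1 + δ) * ν γ)).card : ℝ) ∧
      ((bohrSet Γ (fun γ => (1 + δ) * ν γ)).card : ℝ) ≤
        (1 + 100 * Γ.card * |δ|) * ((bohrSet Γ ν).card : ℝ)

/-!
Bourgain's argument. The function `f u = log |B_{e^u}|` is nondecreasing, and `B_{e^u}` is regular
as soon as `f (u + x) - f (u - x) ≤ 50 r x` for all `0 < x ≤ 1/(50 r)`. If this failed at every
`u ∈ [log (t/2), log t]`, a finite subcover and the Vitali covering lemma would give disjoint
intervals `[u - x, u + x]` of total length `≫ log 2` on each of which `f` jumps by more than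
`50 r x`, so that `f (log t) - f (log (t/2)) > 3 r log 2`. This contradicts the doubling bound
`|B_{2ρ}| ≤ 8^r |B_ρ|`: sorting the points of `B_{2ρ}` into boxes according to the arguments of
`γ(x)`, `γ ∈ Γ`, there are `8^r` boxes and each one lies in a translate of `B_ρ`.
-/

open Set
open scoped Finset

namespace Complex

open scoped Real

theorem abs_arg_le_pi_div_two_mul_norm_sub_one {z : ℂ} (hz : ‖z‖ = 1) :
    |arg z| ≤ π / 2 * ‖z - 1‖ := by
  rw [← angle_one_right (norm_ne_zero_iff.mp (by simp [hz]))]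
  exact angle_le_mul_norm_sub hz norm_one

theorem norm_div_sub_one_le_abs_arg_sub {z w : ℂ} (hz : ‖z‖ = 1) (hw : ‖w‖ = 1) :
    ‖z / w - 1‖ ≤ |arg z - arg w| := by
  have hexp : ∀ {v : ℂ}, ‖v‖ = 1 → exp (arg v * I) = v := fun {v} hv => by
    simpa [hv] using norm_mul_exp_arg_mul_I v
  have hzw : z / w = exp (I * ↑(arg z - arg w)) := by
    rw [ofReal_sub, mul_sub, Complex.exp_sub, mul_comm I, mul_comm I, hexp hz, hexp hw]
  rw [hzw]
  exact Real.norm_exp_I_mul_ofReal_sub_one_le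

end Complex

open Real

theorem floor_div_mem_Icc_of_abs_lt {a ε : ℝ} (h : |a| < 4 * ε) :
    ⌊a / ε⌋ ∈ Finset.Icc (-4 : ℤ) 3 := by
  have hε : 0 < ε := by linarith [abs_nonneg a]
  obtain ⟨h₁, h₂⟩ := abs_lt.mp h
  rw [Finset.mem_Icc, Int.le_floor, ← Int.lt_add_one_iff, Int.floor_lt, le_div_iff₀ hε,
    div_lt_iff₀ hε]
  push_cast
  constructor <;> linarith

theorem abs_sub_lt_of_floor_div_eq {a b ε : ℝ} (hε : 0 < ε) (h : ⌊a / ε⌋ = ⌊b / ε⌋) :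
    |a - b| < ε := by
  have := Int.abs_sub_lt_one_of_floor_eq_floor h
  rwa [← sub_div, abs_div, abs_of_pos hε, div_lt_one hε] at this

theorem Monotone.sum_sub_le_sub_of_pairwiseDisjoint {α β ι : Type*} [LinearOrder α]
    [AddCommGroup β] [PartialOrder β] [IsOrderedAddMonoid β] {f : α → β} (hf : Monotone f)
    (s : Finset ι) {a b : ι → α} {A B : α} (hAB : A ≤ B)
    (hs : ∀ i ∈ s, A ≤ a i ∧ a i ≤ b i ∧ b i ≤ B)
    (hdisj : (s : Set ι).PairwiseDisjoint fun i => Icc (a i) (b i)) :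
    ∑ i ∈ s, (f (b i) - f (a i)) ≤ f B - f A := by
  induction s using Finset.induction_on_max_value a generalizing B with
  | empty => simpa using hf hAB
  | insert i s hi hmax ih =>
    obtain ⟨hAa, hab, hbB⟩ := hs i (by simp)
    have hs' : ∀ j ∈ s, A ≤ a j ∧ a j ≤ b j ∧ b j ≤ a i := fun j hj => by
      refine ⟨(hs j (by simp [hj])).1, (hs j (by simp [hj])).2.1, ?_⟩
      by_contra! hlt
      exact disjoint_left.mp (hdisj (by simp [hj]) (by simp) (ne_of_mem_of_not_mem hj hi))
        ⟨hmax j hj, hlt.le⟩ ⟨le_rfl, hab⟩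
    rw [Finset.sum_insert hi]
    calc f (b i) - f (a i) + ∑ j ∈ s, (f (b j) - f (a j))
        ≤ f B - f (a i) + (f (a i) - f A) :=
          add_le_add (sub_le_sub_right (hf hbB) _) (ih hAa hs' (hdisj.subset (by simp)))
      _ = f B - f A := sub_add_sub_cancel _ _ _

theorem Real.sub_le_sum_of_Icc_subset_biUnion_closedBall {ι : Type*} (s : Finset ι)
    {x r : ι → ℝ} (hr : ∀ i ∈ s, 0 ≤ r i) {a b : ℝ}
    (h : Icc a b ⊆ ⋃ i ∈ s, Metric.closedBall (x i) (r i)) :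
    b - a ≤ ∑ i ∈ s, 2 * r i := by
  have := (MeasureTheory.measure_mono (μ := MeasureTheory.volume) h).trans
    (MeasureTheory.measure_biUnion_finset_le s _)
  simp only [Real.volume_Icc, Real.volume_closedBall] at this
  rwa [← ENNReal.ofReal_sum_of_nonneg (fun i hi => by linarith [hr i hi]),
    ENNReal.ofReal_le_ofReal_iff (Finset.sum_nonneg fun i hi => by linarith [hr i hi])] at this

/- The `10` is twice the enlargement factor `5` of the Vitali covering lemma. -/
theorem Monotone.exists_forall_sub_le_mul {f : ℝ → ℝ} (hf : Monotone f) {a b c η : ℝ}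
    (hab : a ≤ b) (hc : 0 ≤ c) (hf_ab : f (b + η) - f (a - η) < c * (b - a) / 10) :
    ∃ u ∈ Icc a b, ∀ x ∈ Ioc 0 η, f (u + x) - f (u - x) ≤ c * x := by
  by_contra! hbad
  choose! r hr hjump using hbad
  obtain ⟨t, hta, hcover⟩ := isCompact_Icc.elim_nhds_subcover (fun u => Metric.ball u (r u))
    fun u hu => Metric.ball_mem_nhds u (hr u hu).1
  obtain ⟨w, hwt, hdisj, hw⟩ := Vitali.exists_disjoint_subfamily_covering_enlargement_closedBall
    (t : Set ℝ) (fun u => u) r η (fun u hu => (hr u (hta u hu)).2) 5 (by norm_num)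
  have hwfin : w.Finite := t.finite_toSet.subset hwt
  have hwI : ∀ u ∈ hwfin.toFinset, u ∈ Icc a b := fun u hu =>
    hta u (hwt (hwfin.mem_toFinset.mp hu))
  have hlen : b - a ≤ ∑ u ∈ hwfin.toFinset, 2 * (5 * r u) := by
    refine Real.sub_le_sum_of_Icc_subset_biUnion_closedBall (x := fun u => u) _
      (fun u hu => by linarith [(hr u (hwI u hu)).1]) fun v hv => ?_
    obtain ⟨u, hut, hvu⟩ := mem_iUnion₂.mp (hcover hv)
    obtain ⟨u', hu'w, hsub⟩ := hw u hut
    exact mem_biUnion (hwfin.mem_toFinset.mpr hu'w) (hsub (Metric.ball_subset_closedBall hvu))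
  have hη : 0 < η := (hr a ⟨le_rfl, hab⟩).1.trans_le (hr a ⟨le_rfl, hab⟩).2
  have hsum : ∑ u ∈ hwfin.toFinset, (f (u + r u) - f (u - r u)) ≤ f (b + η) - f (a - η) := by
    refine hf.sum_sub_le_sub_of_pairwiseDisjoint _ (by linarith) (fun u hu => ?_) ?_
    · obtain ⟨hr₀, hrη⟩ := hr u (hwI u hu)
      exact ⟨by linarith [(hwI u hu).1], by linarith, by linarith [(hwI u hu).2]⟩
    · simpa [Real.closedBall_eq_Icc] using hdisj
  have hjumps := Finset.sum_le_sum fun u hu => (hjump u (hwI u hu)).le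
  rw [← Finset.mul_sum] at hjumps
  rw [← Finset.mul_sum, ← Finset.mul_sum] at hlen
  nlinarith [mul_le_mul_of_nonneg_left hlen hc]

theorem Monotone.le_one_add_mul_of_log_sub_le {F : ℝ → ℝ} (hF : Monotone F)
    (hFpos : ∀ ρ, 0 < ρ → 0 < F ρ) {K u δ : ℝ} (hδ : 0 < δ) (hδK : δ ≤ 1 / K)
    (hu : ∀ x ∈ Ioc 0 (2 / K), log (F (exp (u + x))) - log (F (exp (u - x))) ≤ K / 2 * x) :
    F ((1 + δ) * exp u) ≤ (1 + K * δ) * F (exp u) := by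
  have hK : 0 < K := one_div_pos.mp (hδ.trans_le hδK)
  have hKδ : K * δ ≤ 1 := by rwa [le_div_iff₀ hK, mul_comm] at hδK
  have hKδ₀ : 0 < K * δ := by positivity
  set x := log (1 + δ) with hx_def
  have hx : 0 < x := log_pos (by linarith)
  have hxδ : x ≤ δ := by linarith [log_le_sub_one_of_pos (show 0 < 1 + δ by linarith)]
  have hFu : 0 < F (exp u) := hFpos _ (exp_pos u)
  have hjump := hu x ⟨hx, hxδ.trans (hδK.trans (by gcongr; norm_num))⟩
  have hmono : log (F (exp (u - x))) ≤ log (F (exp u)) :=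
    log_le_log (hFpos _ (exp_pos _)) (hF (exp_le_exp.mpr (by linarith)))
  have hlog : K * δ / 2 ≤ log (1 + K * δ) := by
    refine le_trans ?_ (le_log_one_add_of_nonneg hKδ₀.le)
    rw [div_le_div_iff₀ (by norm_num) (by linarith)]
    nlinarith
  have hKx : K / 2 * x ≤ K * δ / 2 := by nlinarith
  rw [show (1 + δ) * exp u = exp (u + x) by rw [exp_add, hx_def, exp_log (by linarith), mul_comm],
    ← log_le_log_iff (hFpos _ (exp_pos _)) (by positivity), log_mul (by positivity) hFu.ne']
  linarith

theorem Monotone.one_sub_mul_le_of_log_sub_le {F : ℝ → ℝ} (hF : Monotone F)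
    (hFpos : ∀ ρ, 0 < ρ → 0 < F ρ) {K u d : ℝ} (hK : 2 ≤ K) (hd : 0 < d) (hdK : d ≤ 1 / K)
    (hu : ∀ x ∈ Ioc 0 (2 / K), log (F (exp (u + x))) - log (F (exp (u - x))) ≤ K / 2 * x) :
    (1 - K * d) * F (exp u) ≤ F ((1 - d) * exp u) := by
  have hKd : K * d ≤ 1 := by rwa [le_div_iff₀ (by linarith), mul_comm] at hdK
  have hd2 : d ≤ 1 / 2 := hdK.trans (by gcongr)
  set x := -log (1 - d) with hx_def
  have hx : 0 < x := neg_pos.mpr (log_neg (by linarith) (by linarith))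
  have hxd : x ≤ 2 * d := by
    have hinv : (1 - d)⁻¹ ≤ 1 + 2 * d := by
      rw [inv_le_iff_one_le_mul₀' (by linarith)]
      nlinarith
    linarith [one_sub_inv_le_log_of_pos (show 0 < 1 - d by linarith)]
  have hFu : 0 < F (exp u) := hFpos _ (exp_pos u)
  have hjump := hu x ⟨hx, hxd.trans (by rw [le_div_iff₀ (by linarith)]; linarith)⟩
  have hmono : log (F (exp u)) ≤ log (F (exp (u + x))) :=
    log_le_log hFu (hF (exp_le_exp.mpr (by linarith)))
  have hKx : K / 2 * x ≤ K * d := by nlinarith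
  calc (1 - K * d) * F (exp u) ≤ exp (-(K * d)) * F (exp u) := by
        gcongr; linarith [add_one_le_exp (-(K * d))]
    _ = exp (log (F (exp u)) - K * d) := by rw [exp_sub, exp_log hFu, exp_neg]; ring
    _ ≤ exp (log (F (exp (u - x)))) := exp_le_exp.mpr (by linarith)
    _ = F ((1 - d) * exp u) := by
        rw [exp_log (hFpos _ (exp_pos _)), hx_def, sub_neg_eq_add, exp_add,
          exp_log (by linarith), mul_comm]

theorem Monotone.abs_sub_le_mul_of_log_sub_le {F : ℝ → ℝ} (hF : Monotone F)
    (hFpos : ∀ ρ, 0 < ρ → 0 < F ρ) {K u δ : ℝ} (hK : 2 ≤ K) (hδK : |δ| ≤ 1 / K)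
    (hu : ∀ x ∈ Ioc 0 (2 / K), log (F (exp (u + x))) - log (F (exp (u - x))) ≤ K / 2 * x) :
    |F ((1 + δ) * exp u) - F (exp u)| ≤ K * |δ| * F (exp u) := by
  rw [abs_sub_le_iff]
  rcases lt_trichotomy δ 0 with hδ | rfl | hδ
  · rw [abs_of_neg hδ] at hδK ⊢
    have hlow := hF.one_sub_mul_le_of_log_sub_le hFpos hK (neg_pos.mpr hδ) hδK hu
    have hle : F ((1 + δ) * exp u) ≤ F (exp u) :=
      hF (mul_le_of_le_one_left (exp_pos u).le (by linarith))
    rw [sub_neg_eq_add] at hlow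
    constructor <;> nlinarith
  · simp
  · rw [abs_of_pos hδ] at hδK ⊢
    have hup := hF.le_one_add_mul_of_log_sub_le hFpos hδ hδK hu
    have hle : F (exp u) ≤ F ((1 + δ) * exp u) :=
      hF (le_mul_of_one_le_left (exp_pos u).le (by linarith))
    constructor <;> nlinarith

section BohrSet

variable {G : Type*} [AddCommGroup G] [Fintype G] {Γ : Finset (AddChar G ℂ)}
  {ν : AddChar G ℂ → ℝ}

theorem mem_bohrSet {x : G} : x ∈ bohrSet Γ ν ↔ ∀ γ ∈ Γ, ‖γ x - 1‖ ≤ ν γ := by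
  simp [bohrSet]

theorem monotone_card_bohrSet (hν : ∀ γ ∈ Γ, 0 ≤ ν γ) :
    Monotone fun ρ : ℝ => #(bohrSet Γ fun γ => ρ * ν γ) := fun _ _ h =>
  Finset.card_le_card fun _ hx => mem_bohrSet.mpr fun γ hγ =>
    (mem_bohrSet.mp hx γ hγ).trans (mul_le_mul_of_nonneg_right h (hν γ hγ))

theorem card_bohrSet_pos (hν : ∀ γ ∈ Γ, 0 ≤ ν γ) {ρ : ℝ} (hρ : 0 ≤ ρ) :
    0 < #(bohrSet Γ fun γ => ρ * ν γ) :=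
  Finset.card_pos.mpr ⟨0, mem_bohrSet.mpr fun γ hγ => by simpa using mul_nonneg hρ (hν γ hγ)⟩

theorem eq_one_of_mem_bohrSet {x : G} {γ : AddChar G ℂ} (hγ : γ ∈ Γ) (hν : ν γ = 0)
    (hx : x ∈ bohrSet Γ ν) : γ x = 1 := by
  simpa [hν, sub_eq_zero] using mem_bohrSet.mp hx γ hγ

theorem sub_mem_bohrSet_of_floor_arg_eq (hν : ∀ γ ∈ Γ, 0 ≤ ν γ) {ρ ρ' : ℝ} (hρ : 0 < ρ)
    {x y : G} (hx : x ∈ bohrSet Γ fun γ => ρ' * ν γ) (hy : y ∈ bohrSet Γ fun γ => ρ' * ν γ)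
    (hxy : ∀ γ ∈ Γ, ⌊Complex.arg (γ x) / (ρ * ν γ)⌋ = ⌊Complex.arg (γ y) / (ρ * ν γ)⌋) :
    x - y ∈ bohrSet Γ fun γ => ρ * ν γ := by
  refine mem_bohrSet.mpr fun γ hγ => ?_
  rcases (hν γ hγ).eq_or_lt with h0 | hpos
  · have h0' : ρ' * ν γ = 0 := by rw [← h0, mul_zero]
    simp [AddChar.map_sub_eq_div, eq_one_of_mem_bohrSet hγ h0' hx,
      eq_one_of_mem_bohrSet hγ h0' hy, ← h0]
  · rw [AddChar.map_sub_eq_div]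
    exact (Complex.norm_div_sub_one_le_abs_arg_sub (γ.norm_apply x) (γ.norm_apply y)).trans
      (abs_sub_lt_of_floor_div_eq (by positivity) (hxy γ hγ)).le

theorem card_bohrSet_two_mul_le (hν : ∀ γ ∈ Γ, 0 ≤ ν γ) {ρ : ℝ} (hρ : 0 < ρ) :
    #(bohrSet Γ fun γ => 2 * ρ * ν γ) ≤ 8 ^ #Γ * #(bohrSet Γ fun γ => ρ * ν γ) := by
  -- On `B_{2ρ}`, `|arg γ(x)| < 4 ρ ν γ`, so each coordinate of `box` takes one of 8 values
  -- (when `ν γ = 0` it is `⌊_ / 0⌋ = 0`).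
  set box : G → Γ → ℤ := fun x γ => ⌊Complex.arg (γ.1 x) / (ρ * ν γ)⌋
  have hbox : ∀ x ∈ bohrSet Γ (fun γ => 2 * ρ * ν γ),
      box x ∈ Fintype.piFinset fun _ => Finset.Icc (-4 : ℤ) 3 := by
    refine fun x hx => Fintype.mem_piFinset.mpr fun γ => ?_
    rcases (hν γ γ.2).eq_or_lt with h0 | hpos
    · simp [box, ← h0]
    refine floor_div_mem_Icc_of_abs_lt ?_
    calc |Complex.arg (γ.1 x)| ≤ π / 2 * ‖γ.1 x - 1‖ :=
          Complex.abs_arg_le_pi_div_two_mul_norm_sub_one (γ.1.norm_apply x)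
      _ ≤ π / 2 * (2 * ρ * ν γ) := by gcongr; exact mem_bohrSet.mp hx γ γ.2
      _ < 4 * (ρ * ν γ) := by nlinarith [pi_lt_four, mul_pos hρ hpos]
  have hfiber : ∀ v ∈ Fintype.piFinset fun _ : Γ => Finset.Icc (-4 : ℤ) 3,
      #{x ∈ bohrSet Γ (fun γ => 2 * ρ * ν γ) | box x = v} ≤ #(bohrSet Γ fun γ => ρ * ν γ) := by
    intro v _
    rcases Finset.eq_empty_or_nonempty {x ∈ bohrSet Γ (fun γ => 2 * ρ * ν γ) | box x = v}
      with h | ⟨y, hy⟩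
    · simp [h]
    refine Finset.card_le_card_of_injOn (· - y) (fun x hx => ?_) sub_left_injective.injOn
    rw [Finset.mem_coe] at hx ⊢
    rw [Finset.mem_filter] at hx hy
    exact sub_mem_bohrSet_of_floor_arg_eq hν hρ hx.1 hy.1 fun γ hγ =>
      congrFun (hx.2.trans hy.2.symm) ⟨γ, hγ⟩
  calc _ ≤ _ := Finset.card_le_mul_card_image_of_maps_to hbox _ hfiber
    _ = 8 ^ #Γ * #(bohrSet Γ fun γ => ρ * ν γ) := by simp [mul_comm]

theorem isRegularBohr_exp_mul_of_log_card_sub_le (hν : ∀ γ ∈ Γ, 0 ≤ ν γ) (hΓ : Γ.Nonempty)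
    {u : ℝ} (hu : ∀ x ∈ Ioc 0 (2 / (100 * (#Γ : ℝ))),
      log #(bohrSet Γ fun γ => exp (u + x) * ν γ) - log #(bohrSet Γ fun γ => exp (u - x) * ν γ)
        ≤ 100 * #Γ / 2 * x) :
    IsRegularBohr Γ fun γ => exp u * ν γ := by
  intro δ hδ
  have hK : (2 : ℝ) ≤ 100 * #Γ := by
    have : (1 : ℝ) ≤ #Γ := by exact_mod_cast hΓ.card_pos
    linarith
  have hF : Monotone fun ρ : ℝ => (#(bohrSet Γ fun γ => ρ * ν γ) : ℝ) :=
    Nat.mono_cast.comp (monotone_card_bohrSet hν)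
  have := abs_sub_le_iff.mp <| hF.abs_sub_le_mul_of_log_sub_le
    (fun ρ hρ => Nat.cast_pos.mpr (card_bohrSet_pos hν hρ.le)) hK hδ hu
  simp only [← mul_assoc]
  constructor <;> linarith

theorem log_card_bohrSet_two_mul_sub_le (hν : ∀ γ ∈ Γ, 0 ≤ ν γ) {ρ : ℝ} (hρ : 0 < ρ) :
    log #(bohrSet Γ fun γ => 2 * ρ * ν γ) - log #(bohrSet Γ fun γ => ρ * ν γ) ≤
      #Γ * log 8 := by
  have hpos : (0 : ℝ) < #(bohrSet Γ fun γ => ρ * ν γ) := by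
    exact_mod_cast card_bohrSet_pos hν hρ.le
  rw [sub_le_iff_le_add, ← log_pow, ← log_mul (by positivity) hpos.ne']
  exact log_le_log (by exact_mod_cast card_bohrSet_pos hν (by positivity))
    (by exact_mod_cast card_bohrSet_two_mul_le hν hρ)

theorem exists_forall_log_card_bohrSet_sub_le (hν : ∀ γ ∈ Γ, 0 ≤ ν γ) (hΓ : Γ.Nonempty)
    {ρ : ℝ} (hρ : 0 < ρ) :
    ∃ u ∈ Icc (log ρ) (log (2 * ρ)), ∀ x ∈ Ioc 0 (2 / (100 * (#Γ : ℝ))),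
      log #(bohrSet Γ fun γ => exp (u + x) * ν γ) - log #(bohrSet Γ fun γ => exp (u - x) * ν γ)
        ≤ 100 * #Γ / 2 * x := by
  set r := (#Γ : ℝ)
  have hr : 1 ≤ r := Nat.one_le_cast.mpr hΓ.card_pos
  set η := 2 / (100 * r) with hη
  have hη₀ : 0 < η := by positivity
  have hrη : r * η = 1 / 50 := by rw [hη]; field_simp; ring
  set f : ℝ → ℝ := fun u => log #(bohrSet Γ fun γ => exp u * ν γ)
  have hf : Monotone f := fun u v huv =>
    log_le_log (by exact_mod_cast card_bohrSet_pos hν (exp_pos u).le)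
      (by exact_mod_cast monotone_card_bohrSet hν (exp_le_exp.mpr huv))
  have hdoubling : f (log (2 * ρ)) - f (log ρ) ≤ r * log 8 := by
    simpa only [f, exp_log hρ, exp_log (by positivity : 0 < 2 * ρ)]
      using log_card_bohrSet_two_mul_sub_le hν hρ
  have hlog2 : log (2 * ρ) - log ρ = log 2 := by
    rw [log_mul two_ne_zero hρ.ne', add_sub_cancel_right]
  have hlog8 : log 8 = 3 * log 2 := by
    rw [show (8 : ℝ) = 2 ^ 3 by norm_num, log_pow]; norm_num
  -- Shrinking `[log ρ, log (2 ρ)]` by `η` keeps the intervals `[u - x, u + x]` inside it.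
  obtain ⟨u, hu, hreg⟩ := hf.exists_forall_sub_le_mul (a := log ρ + η) (b := log (2 * ρ) - η)
    (c := 100 * r / 2) (η := η) (by nlinarith [log_two_gt_d9]) (by positivity) (by
      rw [sub_add_cancel, add_sub_cancel_right,
        show 100 * r / 2 * (log (2 * ρ) - η - (log ρ + η)) / 10
          = 5 * r * (log (2 * ρ) - log ρ) - 10 * (r * η) by ring, hlog2, hrη]
      nlinarith [log_two_gt_d9])
  exact ⟨u, ⟨by linarith [hu.1], by linarith [hu.2]⟩, hreg⟩

end BohrSet

theorem exists_regular_dilate_general {G : Type*} [AddCommGroup G] [Fintype G]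
    (Γ : Finset (AddChar G ℂ)) (hΓ : Γ.Nonempty) (ν : AddChar G ℂ → ℝ)
    (hν : ∀ γ ∈ Γ, 0 ≤ ν γ ∧ ν γ ≤ 2) (t : ℝ) (ht0 : 0 < t) :
    ∃ ρ : ℝ, t / 2 ≤ ρ ∧ ρ ≤ t ∧ IsRegularBohr Γ (fun γ => ρ * ν γ) := by
  have hν₀ : ∀ γ ∈ Γ, 0 ≤ ν γ := fun γ hγ => (hν γ hγ).1
  obtain ⟨u, ⟨hu₁, hu₂⟩, hu⟩ := exists_forall_log_card_bohrSet_sub_le hν₀ hΓ (half_pos ht0)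
  rw [mul_div_cancel₀ t two_ne_zero] at hu₂
  refine ⟨exp u, ?_, ?_, isRegularBohr_exp_mul_of_log_card_sub_le hν₀ hΓ hu⟩
  · rwa [← exp_log (half_pos ht0), exp_le_exp]
  · rwa [← exp_log ht0, exp_le_exp]

/-- Bourgain's lemma: every Bohr set has, for each `0 < t ≤ 1`, a regular dilate `B_ρ` with
`t/2 ≤ ρ ≤ t`. -/
theorem exists_regular_dilate {G : Type*} [AddCommGroup G] [Fintype G]
    (Γ : Finset (AddChar G ℂ)) (hΓ : Γ.Nonempty) (ν : AddChar G ℂ → ℝ)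
    (hν : ∀ γ ∈ Γ, 0 ≤ ν γ ∧ ν γ ≤ 2) (t : ℝ) (ht0 : 0 < t) (ht1 : t ≤ 1) :
    ∃ ρ : ℝ, t / 2 ≤ ρ ∧ ρ ≤ t ∧ IsRegularBohr Γ (fun γ => ρ * ν γ) :=
  exists_regular_dilate_general Γ hΓ ν hν t ht0
end

section
/- There exists an absolute constant C > 0 such that the following holds (Chang's lemma). Let N ≥ 1, let A ⊆ ℤ/Nℤ be nonempty of density α = |A|/N with α ≤ 1/2, and let δ > 0. Then dim Spec_δ(A) ≤ C·(log(1/α))^C/δ². -/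
open scoped Classical

/-- The Fourier coefficient `1̂_A(ξ) = 𝔼_{x ∈ ℤ/Nℤ} 1_A(x) e(-ξx/N)` of the indicator of
`A ⊆ ℤ/Nℤ` at the frequency `ξ`. -/
noncomputable def indFourierCoeff {N : ℕ} (A : Finset (ZMod N)) (ξ : ZMod N) : ℂ :=
  (N : ℂ)⁻¹ * ∑ x ∈ A, Complex.exp (-(2 * Real.pi * Complex.I * (ξ.val : ℂ) * (x.val : ℂ)) / N)

/-- The `δ`-large spectrum `Spec_δ(A) = {ξ : |1̂_A(ξ)| ≥ δα}` of a set `A ⊆ ℤ/Nℤ` of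
density `α`. -/
noncomputable def largeSpec {N : ℕ} [NeZero N] (A : Finset (ZMod N)) (δ : ℝ) :
    Finset (ZMod N) :=
  Finset.univ.filter fun ξ => δ * ((A.card : ℝ) / N) ≤ ‖indFourierCoeff A ξ‖

/-- A finset `S` of an abelian group is dissociated if the only way to write `0` as
`∑_{s ∈ S} ε_s s` with `ε_s ∈ {-1,0,1}` is with all `ε_s = 0`. -/
def IsDissociated {G : Type*} [AddCommGroup G] (S : Finset G) : Prop :=
  ∀ ε : G → ℤ, (∀ s ∈ S, ε s = -1 ∨ ε s = 0 ∨ ε s = 1) →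
    (∑ s ∈ S, ε s • s) = 0 → ∀ s ∈ S, ε s = 0

/-- The (additive) dimension of a finset: the size of its largest dissociated subset. -/
noncomputable def addDim {G : Type*} [AddCommGroup G] (S : Finset G) : ℕ :=
  (S.powerset.filter IsDissociated).sup Finset.card

/-
Let `Λ` be a dissociated set of characters that are `δ`-large on `A`, and `L = log (1 / α)`.
Parseval gives `|Λ| δ² ≤ 1 / α - 1 = exp L - 1`. The Riesz product
`∏_{ψ ∈ Λ} (1 + (δ / 2) Re (θ_ψ ψ))`, with phases `θ_ψ` aligning `ψ` with its sum over `A`, is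
positive and, by dissociativity, has total mass `|G|`; comparing this with its mass on `A` through
the concavity of `log` gives `|Λ| δ² ≤ (8 / 3) L`. The first bound wins for `L ≤ 1`, the second
for `L ≥ 1`, and together they give `|Λ| δ² ≤ (8 / 3) L ^ (8 / 3)` because
`(8 / 3) (log 2) ^ (8 / 3) ≥ 1`.
-/

open Finset Real
open scoped ComplexConjugate

lemma two_rpow_le_two_mul {u : ℝ} (hu₁ : 1 ≤ u) (hu₂ : u ≤ 2) : (2 : ℝ) ^ u ≤ 2 * u := by
  have h := rpow_one_add_le_one_add_mul_self (s := 1) (by norm_num) (sub_nonneg.2 hu₁)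
    (by linarith : u - 1 ≤ 1)
  calc (2 : ℝ) ^ u = 2 * (1 + 1) ^ (u - 1) := by
        rw [one_add_one_eq_two, ← rpow_one_add' (by norm_num) (by linarith)]; ring_nf
    _ ≤ 2 * u := by linarith

lemma one_le_eight_thirds_mul_log_two_rpow : 1 ≤ (8 / 3 : ℝ) * log 2 ^ (8 / 3 : ℝ) := by
  have hcube : (log 2 ^ (8 / 3 : ℝ)) ^ 3 = log 2 ^ 8 := by
    rw [← rpow_natCast, ← rpow_mul (log_pos one_lt_two).le]; norm_num
  have : (3 / 8 : ℝ) ^ 3 ≤ (log 2 ^ (8 / 3 : ℝ)) ^ 3 := by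
    rw [hcube]
    calc (3 / 8 : ℝ) ^ 3 ≤ 0.6931 ^ 8 := by norm_num
      _ ≤ log 2 ^ 8 := by gcongr; linarith [log_two_gt_d9]
  have := le_of_pow_le_pow_left₀ (by norm_num) (by positivity) this
  linarith

lemma le_mul_rpow_of_le_exp_sub_one {C b L : ℝ} (hC : 2 ≤ C) (hClog : 1 ≤ C * log 2 ^ C)
    (hL : log 2 ≤ L) (hexp : b ≤ exp L - 1) (hlin : b ≤ C * L) : b ≤ C * L ^ C := by
  have hlog₂ : 0 < log 2 := log_pos one_lt_two
  rcases le_total 1 L with hL₁ | hL₁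
  · calc b ≤ C * L := hlin
      _ = C * L ^ (1 : ℝ) := by rw [rpow_one]
      _ ≤ C * L ^ C := by gcongr; linarith
  set u := L / log 2
  have hu₁ : 1 ≤ u := (one_le_div hlog₂).2 hL
  have hu₂ : u ≤ 2 := by rw [div_le_iff₀ hlog₂]; linarith [log_two_gt_d9]
  have hLu : L = log 2 * u := (mul_div_cancel₀ L hlog₂.ne').symm
  calc b ≤ 2 ^ u - 1 := by rwa [hLu, ← rpow_def_of_pos two_pos] at hexp
    _ ≤ u ^ (2 : ℝ) := by rw [rpow_two]; nlinarith [two_rpow_le_two_mul hu₁ hu₂]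
    _ ≤ u ^ C := rpow_le_rpow_of_exponent_le hu₁ hC
    _ ≤ C * log 2 ^ C * u ^ C := le_mul_of_one_le_left (by positivity) hClog
    _ = C * L ^ C := by rw [hLu, mul_rpow hlog₂.le (by linarith), mul_assoc]

lemma three_halves_mul_sq_le {t : ℝ} (ht₀ : 0 ≤ t) (ht : t ≤ 1 / 2) :
    3 / 2 * t ^ 2 ≤ (1 + 2 * t) / 2 * log (1 + t) + (1 - 2 * t) / 2 * log (1 - t) := by
  have h1t : 0 < 1 - t ^ 2 := by nlinarith
  have hsum : -(t ^ 2 + 4 / 3 * t ^ 4) ≤ log (1 + t) + log (1 - t) := by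
    have hgap : 0 ≤ 1 - (1 - t ^ 2)⁻¹ + (t ^ 2 + 4 / 3 * t ^ 4) := by
      rw [show 1 - (1 - t ^ 2)⁻¹ + (t ^ 2 + 4 / 3 * t ^ 4)
          = t ^ 4 * (1 - 4 * t ^ 2) / (3 * (1 - t ^ 2)) by field_simp; ring]
      exact div_nonneg (mul_nonneg (by positivity) (by nlinarith)) (by linarith)
    rw [← log_mul (by linarith) (by linarith), show (1 + t) * (1 - t) = 1 - t ^ 2 by ring]
    linarith [one_sub_inv_le_log_of_pos h1t]
  have hdiff : 2 * t + 2 / 3 * t ^ 3 ≤ log (1 + t) - log (1 - t) := by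
    have := sum_le_hasSum (range 2) (fun k _ => by positivity)
      (hasSum_log_sub_log_of_abs_lt_one (x := t) (by rw [abs_of_nonneg ht₀]; linarith))
    norm_num [sum_range_succ] at this
    linarith
  nlinarith [mul_le_mul_of_nonneg_left hdiff ht₀]

lemma mul_log_add_mul_log_le_log_one_add_mul {t w : ℝ} (ht : |t| < 1) (hw : |w| ≤ 1) :
    (1 + w) / 2 * log (1 + t) + (1 - w) / 2 * log (1 - t) ≤ log (1 + t * w) := by
  obtain ⟨ht₁, ht₂⟩ := abs_lt.1 ht
  obtain ⟨hw₁, hw₂⟩ := abs_le.1 hw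
  have := strictConcaveOn_log_Ioi.concaveOn.2 (Set.mem_Ioi.2 (by linarith : 0 < 1 + t))
    (Set.mem_Ioi.2 (by linarith : 0 < 1 - t)) (by linarith : 0 ≤ (1 + w) / 2)
    (by linarith : 0 ≤ (1 - w) / 2) (by ring)
  rwa [smul_eq_mul, smul_eq_mul, smul_eq_mul, smul_eq_mul,
    show (1 + w) / 2 * (1 + t) + (1 - w) / 2 * (1 - t) = 1 + t * w by ring] at this

lemma mul_card_le_log_of_sum_prod_one_add_mul_le {α ι : Type*} {A : Finset α} {Λ : Finset ι}
    {w : ι → α → ℝ} {t M : ℝ} (hA : A.Nonempty) (ht₀ : 0 ≤ t) (ht : t ≤ 1 / 2)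
    (hw : ∀ i ∈ Λ, ∀ x ∈ A, |w i x| ≤ 1) (hwA : ∀ i ∈ Λ, 2 * t * #A ≤ ∑ x ∈ A, w i x)
    (hM : ∑ x ∈ A, ∏ i ∈ Λ, (1 + t * w i x) ≤ M) :
    3 / 2 * t ^ 2 * #Λ ≤ log (M / #A) := by
  have hA₀ : (0 : ℝ) < #A := by exact_mod_cast hA.card_pos
  have ht₁ : |t| < 1 := by rw [abs_of_nonneg ht₀]; linarith
  -- the chord of the concave function `w ↦ log (1 + t w)` over `[-1, 1]`
  set φ : ℝ → ℝ := fun w => (1 + w) / 2 * log (1 + t) + (1 - w) / 2 * log (1 - t)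
  have hfactor : ∀ x ∈ A, ∀ i ∈ Λ, 0 < 1 + t * w i x := fun x hx i hi => by
    nlinarith [abs_le.1 (hw i hi x hx)]
  have hgain : ∀ i ∈ Λ, 3 / 2 * t ^ 2 ≤ (#A : ℝ)⁻¹ * ∑ x ∈ A, φ (w i x) := by
    intro i hi
    have hlog : log (1 - t) ≤ log (1 + t) := log_le_log (by linarith) (by linarith)
    have hsum : ∑ x ∈ A, φ (w i x) = #A * ((log (1 + t) + log (1 - t)) / 2)
        + (∑ x ∈ A, w i x) * ((log (1 + t) - log (1 - t)) / 2) := by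
      have hφ : ∀ x, φ (w i x) = (log (1 + t) + log (1 - t)) / 2
          + w i x * ((log (1 + t) - log (1 - t)) / 2) := fun x => by simp only [φ]; ring
      rw [sum_congr rfl fun x _ => hφ x, sum_add_distrib, sum_const, nsmul_eq_mul, sum_mul]
    rw [hsum, le_inv_mul_iff₀ hA₀]
    nlinarith [three_halves_mul_sq_le ht₀ ht, mul_le_mul_of_nonneg_right (hwA i hi)
      (by linarith : 0 ≤ (log (1 + t) - log (1 - t)) / 2)]
  have hprod_pos : ∀ x ∈ A, 0 < ∏ i ∈ Λ, (1 + t * w i x) := fun x hx =>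
    prod_pos (hfactor x hx)
  calc 3 / 2 * t ^ 2 * #Λ ≤ ∑ i ∈ Λ, (#A : ℝ)⁻¹ * ∑ x ∈ A, φ (w i x) := by
        rw [mul_comm, ← nsmul_eq_mul]; exact card_nsmul_le_sum _ _ _ hgain
    _ = ∑ x ∈ A, (#A : ℝ)⁻¹ * ∑ i ∈ Λ, φ (w i x) := by
        simp_rw [← mul_sum]; rw [sum_comm]
    _ ≤ ∑ x ∈ A, (#A : ℝ)⁻¹ * log (∏ i ∈ Λ, (1 + t * w i x)) := by
        refine sum_le_sum fun x hx => mul_le_mul_of_nonneg_left ?_ (by positivity)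
        rw [log_prod fun i hi => (hfactor x hx i hi).ne']
        exact sum_le_sum fun i hi => mul_log_add_mul_log_le_log_one_add_mul ht₁ (hw i hi x hx)
    _ ≤ log (∑ x ∈ A, (#A : ℝ)⁻¹ * ∏ i ∈ Λ, (1 + t * w i x)) :=
        strictConcaveOn_log_Ioi.concaveOn.le_map_sum (fun _ _ => by positivity)
          (by simp [hA₀.ne']) hprod_pos
    _ ≤ log (M / #A) := by
        rw [← mul_sum, inv_mul_eq_div]
        exact log_le_log (div_pos (sum_pos hprod_pos hA) hA₀) (by gcongr)

lemma exists_norm_le_one_re_mul_eq_norm (z : ℂ) : ∃ θ : ℂ, ‖θ‖ ≤ 1 ∧ (θ * z).re = ‖z‖ := by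
  rcases eq_or_ne z 0 with rfl | hz
  · exact ⟨0, by simp⟩
  refine ⟨conj z / ‖z‖, by simp [hz], ?_⟩
  rw [div_mul_eq_mul_div, mul_comm, Complex.mul_conj, Complex.normSq_eq_norm_sq]
  norm_cast
  field_simp

section Dissociation
variable {H : Type*} [AddCommGroup H]

lemma AddDissociated.zero_notMem {s : Set H} (hs : AddDissociated s) :
    0 ∉ s := fun h0 => by
  have : ({0} : Finset H) = ∅ := hs (by simpa using h0) (by simp) (by simp)
  simp at this

lemma IsDissociated.addDissociated {S : Finset H} (hS : IsDissociated S) :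
    AddDissociated (S : Set H) := by
  intro t ht u hu htu
  simp only [Set.mem_ofPred_eq, coe_subset] at ht hu
  have hε := hS (fun s => (if s ∈ t then 1 else 0) - (if s ∈ u then 1 else 0))
    (fun s _ => by split_ifs <;> simp)
    (by simp_rw [sub_smul, ite_smul, one_smul, zero_smul, sum_sub_distrib, sum_ite_mem,
          inter_eq_right.2 ht, inter_eq_right.2 hu]; exact sub_eq_zero.2 htu)
  ext s
  constructor <;> intro hs <;> by_contra h
  · simpa [hs, h] using hε s (ht hs)
  · simpa [hs, h] using hε s (hu hs)

lemma AddDissociated.image_addEquiv {K : Type*} [AddCommGroup K] {s : Set H}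
    (hs : AddDissociated s) (e : H ≃+ K) : AddDissociated (e '' s) := by
  have : e '' s = e.symm ⁻¹' s := e.toEquiv.image_eq_preimage_symm s
  rwa [this, AddEquiv.addDissociated_preimage]

lemma exists_isDissociated_card_eq_addDim (S : Finset H) :
    ∃ T ⊆ S, IsDissociated T ∧ #T = addDim S := by
  have hne : (S.powerset.filter IsDissociated).Nonempty :=
    ⟨∅, mem_filter.2 ⟨empty_mem_powerset S, fun _ _ _ s hs => absurd hs (notMem_empty s)⟩⟩
  obtain ⟨T, hT, hcard⟩ := exists_mem_eq_sup _ hne card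
  rw [mem_filter, mem_powerset] at hT
  exact ⟨T, hT.1, hT.2, hcard.symm⟩

end Dissociation

section FiniteAbelianGroup
variable {G : Type*} [AddCommGroup G] [Fintype G]

lemma AddDissociated.sum_prod_one_add_re {Λ : Finset (AddChar G ℂ)}
    (hΛ : AddDissociated (Λ : Set (AddChar G ℂ))) (d : AddChar G ℂ → ℂ) :
    ∑ x, ∏ ψ ∈ Λ, (1 + (d ψ * ψ x).re) = Fintype.card G := by
  have hsupp : AddDissociated {ψ | (if ψ ∈ Λ then d ψ else 0) ≠ 0} :=
    hΛ.subset fun ψ hψ => by by_contra h; simp_all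
  have h := hsupp.randomisation 1
  simp only [Pi.one_apply, prod_const_one, Fintype.expect_eq_sum_div_card] at h
  rw [div_eq_one_iff_eq (by simp)] at h
  rw [← h]
  refine sum_congr rfl fun x _ => ?_
  rw [← prod_subset (subset_univ Λ) fun ψ _ hψ => by simp [hψ]]
  exact prod_congr rfl fun ψ hψ => by simp [hψ]

lemma sum_norm_sq_sum_apply (A : Finset G) :
    ∑ ψ : AddChar G ℂ, ‖∑ x ∈ A, ψ x‖ ^ 2 = Fintype.card G * #A := by
  have key : ∀ ψ : AddChar G ℂ, (‖∑ x ∈ A, ψ x‖ : ℂ) ^ 2 = ∑ x ∈ A, ∑ y ∈ A, ψ (x - y) := by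
    intro ψ
    rw [← Complex.mul_conj', map_sum, sum_mul_sum]
    simp_rw [← AddChar.map_neg_eq_conj, ← AddChar.map_add_eq_mul, sub_eq_add_neg]
  apply Complex.ofReal_injective
  push_cast
  simp_rw [key]
  calc ∑ ψ : AddChar G ℂ, ∑ x ∈ A, ∑ y ∈ A, ψ (x - y)
      = ∑ x ∈ A, ∑ y ∈ A, ∑ ψ : AddChar G ℂ, ψ (x - y) := by
        rw [sum_comm]; exact sum_congr rfl fun x _ => sum_comm
    _ = Fintype.card G * #A := by
        simp [AddChar.sum_apply_eq_ite, sub_eq_zero, mul_comm]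

lemma norm_sum_apply_le_card (A : Finset G) (ψ : AddChar G ℂ) : ‖∑ x ∈ A, ψ x‖ ≤ #A :=
  (norm_sum_le _ _).trans (by simp)

lemma card_mul_sq_le_of_le_norm_sum_apply {A : Finset G} {Λ : Finset (AddChar G ℂ)} {δ : ℝ}
    (hA : A.Nonempty) (hδ : 0 ≤ δ) (hΛ : (0 : AddChar G ℂ) ∉ Λ)
    (hlarge : ∀ ψ ∈ Λ, δ * #A ≤ ‖∑ x ∈ A, ψ x‖) :
    #Λ * δ ^ 2 ≤ Fintype.card G / #A - 1 := by
  have hA₀ : (0 : ℝ) < #A := by exact_mod_cast hA.card_pos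
  have hlow : #Λ * (δ * #A) ^ 2 ≤ ∑ ψ ∈ Λ, ‖∑ x ∈ A, ψ x‖ ^ 2 := by
    rw [← nsmul_eq_mul]
    exact card_nsmul_le_sum _ _ _ fun ψ hψ => pow_le_pow_left₀ (by positivity) (hlarge ψ hψ) 2
  have hup : ∑ ψ ∈ Λ, ‖∑ x ∈ A, ψ x‖ ^ 2 + (#A : ℝ) ^ 2 ≤ Fintype.card G * #A := by
    have := sum_le_univ_sum_of_nonneg (s := insert 0 Λ)
      (f := fun ψ : AddChar G ℂ => ‖∑ x ∈ A, ψ x‖ ^ 2) fun ψ => by positivity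
    simpa [sum_insert hΛ, sum_norm_sq_sum_apply, add_comm] using this
  rw [le_sub_iff_add_le, le_div_iff₀ hA₀]
  nlinarith

lemma exists_riesz_product {Λ : Finset (AddChar G ℂ)}
    (hΛ : AddDissociated (Λ : Set (AddChar G ℂ))) (A : Finset G) (t : ℝ) :
    ∃ w : AddChar G ℂ → G → ℝ, (∀ ψ x, |w ψ x| ≤ 1) ∧ (∀ ψ, ∑ x ∈ A, w ψ x = ‖∑ x ∈ A, ψ x‖) ∧
      ∑ x, ∏ ψ ∈ Λ, (1 + t * w ψ x) = Fintype.card G := by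
  choose θ hθ₁ hθ₂ using fun ψ : AddChar G ℂ => exists_norm_le_one_re_mul_eq_norm (∑ x ∈ A, ψ x)
  refine ⟨fun ψ x => (θ ψ * ψ x).re, fun ψ x => ?_, fun ψ => ?_, ?_⟩
  · refine (Complex.abs_re_le_norm _).trans ?_
    rw [norm_mul, AddChar.norm_apply, mul_one]
    exact hθ₁ ψ
  · rw [← Complex.re_sum, ← mul_sum, hθ₂]
  · simpa [mul_assoc] using hΛ.sum_prod_one_add_re fun ψ => t * θ ψ

lemma AddDissociated.card_mul_sq_le_log {A : Finset G} {Λ : Finset (AddChar G ℂ)} {δ : ℝ}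
    (hΛ : AddDissociated (Λ : Set (AddChar G ℂ))) (hA : A.Nonempty) (hδ₀ : 0 ≤ δ) (hδ₁ : δ ≤ 1)
    (hlarge : ∀ ψ ∈ Λ, δ * #A ≤ ‖∑ x ∈ A, ψ x‖) :
    #Λ * δ ^ 2 ≤ 8 / 3 * log (Fintype.card G / #A) := by
  obtain ⟨w, hw, hwA, hP⟩ := exists_riesz_product hΛ A (δ / 2)
  have hPA : ∑ x ∈ A, ∏ ψ ∈ Λ, (1 + δ / 2 * w ψ x) ≤ Fintype.card G :=
    hP ▸ sum_le_univ_sum_of_nonneg fun x => prod_nonneg fun ψ _ => by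
      nlinarith [abs_le.1 (hw ψ x)]
  have := mul_card_le_log_of_sum_prod_one_add_mul_le (t := δ / 2) hA (by positivity) (by linarith)
    (fun ψ _ x _ => hw ψ x) (fun ψ hψ => by rw [hwA]; linarith [hlarge ψ hψ]) hPA
  linarith

theorem AddDissociated.card_le_mul_log_rpow {A : Finset G} {Λ : Finset (AddChar G ℂ)} {δ : ℝ}
    (hΛ : AddDissociated (Λ : Set (AddChar G ℂ))) (hA : A.Nonempty)
    (hAG : 2 * #A ≤ Fintype.card G) (hδ : 0 < δ) (hlarge : ∀ ψ ∈ Λ, δ * #A ≤ ‖∑ x ∈ A, ψ x‖) :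
    #Λ ≤ 8 / 3 * log (Fintype.card G / #A) ^ (8 / 3 : ℝ) / δ ^ 2 := by
  have hA₀ : (0 : ℝ) < #A := by exact_mod_cast hA.card_pos
  have hratio : (2 : ℝ) ≤ Fintype.card G / #A := by
    rw [le_div_iff₀ hA₀]; exact_mod_cast hAG
  rcases Λ.eq_empty_or_nonempty with rfl | ⟨ψ, hψ⟩
  · have := log_nonneg (by linarith : (1 : ℝ) ≤ Fintype.card G / #A)
    simp only [card_empty, CharP.cast_eq_zero]
    positivity
  have hδ₁ : δ ≤ 1 :=
    (mul_le_iff_le_one_left hA₀).1 ((hlarge ψ hψ).trans (norm_sum_apply_le_card A ψ))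
  rw [le_div_iff₀ (by positivity)]
  refine le_mul_rpow_of_le_exp_sub_one (by norm_num) one_le_eight_thirds_mul_log_two_rpow
    (log_le_log two_pos hratio) ?_ (hΛ.card_mul_sq_le_log hA hδ.le hδ₁ hlarge)
  rw [exp_log (by linarith)]
  exact card_mul_sq_le_of_le_norm_sum_apply hA hδ.le hΛ.zero_notMem hlarge

end FiniteAbelianGroup

section ZMod
variable {N : ℕ} [NeZero N]

lemma norm_indFourierCoeff (A : Finset (ZMod N)) (ξ : ZMod N) :
    ‖indFourierCoeff A ξ‖ = ‖∑ x ∈ A, AddChar.zmodAddEquiv ξ x‖ / N := by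
  have hexp (x : ZMod N) : Complex.exp (-(2 * π * Complex.I * (ξ.val : ℂ) * (x.val : ℂ)) / N)
      = conj (AddChar.zmodAddEquiv ξ x) := by
    have hint : -(ξ * x) = ((-(ξ.val * x.val : ℤ) : ℤ) : ZMod N) := by simp
    rw [← AddChar.map_neg_eq_conj, show AddChar.zmodAddEquiv ξ (-x) = ZMod.stdAddChar (-(ξ * x)) by
      rw [← mul_neg]; rfl, hint, ZMod.stdAddChar_coe]
    push_cast; ring_nf
  simp_rw [indFourierCoeff, hexp, ← map_sum, norm_mul, Complex.norm_conj, norm_inv,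
    Complex.norm_natCast, inv_mul_eq_div]

lemma le_norm_sum_of_mem_largeSpec {A : Finset (ZMod N)} {δ : ℝ} {ξ : ZMod N}
    (hξ : ξ ∈ largeSpec A δ) : δ * #A ≤ ‖∑ x ∈ A, AddChar.zmodAddEquiv ξ x‖ := by
  have hN : (0 : ℝ) < N := by exact_mod_cast NeZero.pos N
  have := (mem_filter.1 hξ).2
  rwa [norm_indFourierCoeff, mul_div_assoc', div_le_div_iff_of_pos_right hN] at this

end ZMod

/-- Chang's lemma: `dim Spec_δ(A) ≤ C (log(1/α))^C / δ²`. -/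
theorem chang_lemma :
    ∃ C : ℝ, 0 < C ∧ ∀ (N : ℕ) [NeZero N] (A : Finset (ZMod N)) (δ : ℝ),
      A.Nonempty → (A.card : ℝ) / N ≤ 1 / 2 → 0 < δ →
      (addDim (largeSpec A δ) : ℝ) ≤
        C * (Real.log (1 / ((A.card : ℝ) / N))) ^ C / δ ^ 2 := by
  refine ⟨8 / 3, by norm_num, fun N _ A δ hA hα hδ => ?_⟩
  obtain ⟨T, hTS, hT, hTcard⟩ := exists_isDissociated_card_eq_addDim (largeSpec A δ)
  have hAN : 2 * #A ≤ Fintype.card (ZMod N) := by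
    have hN : (0 : ℝ) < N := by exact_mod_cast NeZero.pos N
    have : (2 * #A : ℝ) ≤ N := by rw [div_le_iff₀ hN] at hα; linarith
    rw [ZMod.card]; exact_mod_cast this
  have hΛ := hT.addDissociated.image_addEquiv AddChar.zmodAddEquiv
  rw [← coe_image] at hΛ
  have := hΛ.card_le_mul_log_rpow hA hAN hδ fun ψ hψ => by
    obtain ⟨ξ, hξ, rfl⟩ := mem_image.1 hψ
    exact le_norm_sum_of_mem_largeSpec (hTS hξ)
  rw [one_div_div, ← hTcard]
  rwa [card_image_of_injective _ AddChar.zmodAddEquiv.injective, ZMod.card] at this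
end

section
/- Let S be a finite nonempty set, F a field, and let f: S × S × S → F be defined by f(x,y,z) = 1 if x = y = z and f(x,y,z) = 0 otherwise. Then the slice rank of f equals |S|. -/
open scoped Classical
open Module

/-- A function of three variables has slice rank one if it is the product of a function of
one of the variables and a function of the remaining two variables. -/
def IsSliceRankOne {α F : Type*} [Field F] (f : α → α → α → F) : Prop :=
  (∃ (g : α → F) (h : α → α → F), ∀ x y z, f x y z = g x * h y z) ∨
  (∃ (g : α → F) (h : α → α → F), ∀ x y z, f x y z = g y * h x z) ∨
  (∃ (g : α → F) (h : α → α → F), ∀ x y z, f x y z = g z * h x y)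

/-- `f` has slice rank at most `m` if it is a sum of `m` functions of slice rank one. -/
def HasSliceRankLE {α F : Type*} [Field F] (f : α → α → α → F) (m : ℕ) : Prop :=
  ∃ g : Fin m → (α → α → α → F),
    (∀ i, IsSliceRankOne (g i)) ∧ ∀ x y z, f x y z = ∑ i, g i x y z

/-- The slice rank of `f`: the least `m` such that `f` is a sum of `m` slice-rank-one
functions. -/
noncomputable def sliceRank {α F : Type*} [Field F] (f : α → α → α → F) : ℕ :=
  sInf {m | HasSliceRankLE f m}


open Module

lemma exists_large_support {ι F : Type*} [Fintype ι] [Field F]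
    (V : Submodule F (ι → F)) :
    ∃ v ∈ V, finrank F V ≤ Fintype.card {i // v i ≠ 0} := by
  classical
  -- the evaluation functionals on V
  set φ : ι → Module.Dual F V := fun s => (LinearMap.proj s).comp V.subtype with hφ
  have hspan : Submodule.span F (Set.range φ) = ⊤ := by
    -- dualMap of the inclusion is surjective, and projections span the dual of ι → F
    have hinj : Function.Injective V.subtype := Subtype.val_injective
    have hsurj := LinearMap.dualMap_surjective_of_injective hinj
    have hspan' : Submodule.span F (Set.range fun s : ι => (LinearMap.proj s : (ι → F) →ₗ[F] F)) = ⊤ := by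
      have hb := Basis.span_eq (Pi.basisFun F ι).dualBasis
      have : Set.range (Pi.basisFun F ι).dualBasis
          = Set.range fun s : ι => (LinearMap.proj s : (ι → F) →ₗ[F] F) := by
        ext x
        constructor
        · rintro ⟨s, rfl⟩
          exact ⟨s, by ext v; simp [Pi.basisFun, Basis.dualBasis_apply_self]⟩
        · rintro ⟨s, rfl⟩
          exact ⟨s, by ext v; simp [Pi.basisFun, Basis.dualBasis_apply_self]⟩
      rwa [this] at hb
    have : Set.range φ = V.subtype.dualMap '' (Set.range fun s : ι => (LinearMap.proj s : (ι → F) →ₗ[F] F)) := by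
      rw [← Set.range_comp]
      rfl
    rw [this, Submodule.span_image, hspan', Submodule.map_top, LinearMap.range_eq_top.2 hsurj]
  -- extract a basis of the dual from the spanning set
  obtain ⟨b, hbsub, hbspan, hbind⟩ := exists_linearIndependent F (Set.range φ)
  rw [hspan] at hbspan
  haveI : FiniteDimensional F V := FiniteDimensional.finiteDimensional_submodule V
  let B : Basis b F (Module.Dual F V) := Basis.mk hbind (by rw [Subtype.range_coe_subtype, Set.setOf_mem_eq, hbspan])
  haveI : Fintype b := FiniteDimensional.fintypeBasisIndex B
  have hcard : Fintype.card b = finrank F V := by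
    rw [← Module.finrank_eq_card_basis B, Subspace.dual_finrank_eq]
  have hsel : ∀ x : b, ∃ s : ι, φ s = (x : Module.Dual F V) := fun x => hbsub x.2
  choose σ hσ using hsel
  have hσinj : Function.Injective σ := by
    intro x y hxy
    have : (x : Module.Dual F V) = y := by rw [← hσ x, ← hσ y, hxy]
    exact Subtype.ext this
  let L : V →ₗ[F] (b → F) := LinearMap.pi fun x : b => (x : Module.Dual F V)
  have hLinj : Function.Injective L := by
    rw [← LinearMap.ker_eq_bot, LinearMap.ker_eq_bot']
    intro v hv
    have hall : ∀ ψ : Module.Dual F V, ψ v = 0 := by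
      intro ψ
      have hψ : ψ ∈ Submodule.span F b := by rw [hbspan]; trivial
      induction hψ using Submodule.span_induction with
      | mem x hx =>
          have := congrFun hv ⟨x, hx⟩
          simpa [L] using this
      | zero => simp
      | add x y _ _ hx hy => simp [hx, hy]
      | smul c x _ hx => simp [hx]
    exact (Module.forall_dual_apply_eq_zero_iff F v).mp hall
  have hLsurj : Function.Surjective L := by
    have hfr : finrank F V = finrank F (b → F) := by
      rw [Module.finrank_pi, hcard]
    exact (LinearMap.injective_iff_surjective_of_finrank_eq_finrank hfr).mp hLinj
  obtain ⟨v, hv⟩ := hLsurj 1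
  refine ⟨(v : ι → F), v.2, ?_⟩
  rw [← hcard]
  have hne : ∀ x : b, (v : ι → F) (σ x) ≠ 0 := by
    intro x
    have h1 : (x : Module.Dual F V) v = 1 := by
      have := congrFun hv x; simpa [L] using this
    rw [← hσ x] at h1
    simp only [φ, LinearMap.comp_apply, LinearMap.proj_apply] at h1
    simp only [Submodule.subtype_apply] at h1
    rw [h1]; exact one_ne_zero
  exact Fintype.card_le_of_injective (fun x => ⟨σ x, hne x⟩)
    (fun x y hxy => hσinj (congrArg Subtype.val hxy))


lemma rank_sum_le_card {n ι F : Type*} [Fintype n] [Fintype ι] [Field F]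
    (I : Finset ι) (N : ι → Matrix n n F)
    (hN : ∀ i ∈ I, ∃ p r : n → F, N i = Matrix.vecMulVec p r) :
    (∑ i ∈ I, N i).rank ≤ I.card := by
  classical
  let p : ι → n → F := fun i => if h : ∃ p r : n → F, N i = Matrix.vecMulVec p r then h.choose else 0
  let r : ι → n → F := fun i => if h : ∃ p r : n → F, N i = Matrix.vecMulVec p r then h.choose_spec.choose else 0
  have hpr : ∀ i ∈ I, N i = Matrix.vecMulVec (p i) (r i) := by
    intro i hi
    have h := hN i hi
    simp only [p, r, dif_pos h]
    exact h.choose_spec.choose_spec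
  have hrange : LinearMap.range (∑ i ∈ I, N i).mulVecLin ≤ Submodule.span F (↑(I.image p) : Set (n → F)) := by
    rintro x ⟨c, rfl⟩
    have hx : (∑ i ∈ I, N i).mulVecLin c = ∑ i ∈ I, (dotProduct (r i) c) • p i := by
      ext s
      simp only [Matrix.mulVecLin_apply, Matrix.mulVec, dotProduct,
        Matrix.sum_apply, Finset.sum_apply, Pi.smul_apply, smul_eq_mul]
      calc ∑ x : n, (∑ i ∈ I, N i s x) * c x
          = ∑ x : n, ∑ i ∈ I, N i s x * c x :=
            Finset.sum_congr rfl fun x _ => Finset.sum_mul ..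
        _ = ∑ i ∈ I, ∑ x : n, N i s x * c x := Finset.sum_comm
        _ = ∑ i ∈ I, (∑ x : n, r i x * c x) * p i s := by
            refine Finset.sum_congr rfl fun i hi => ?_
            rw [hpr i hi, Finset.sum_mul]
            exact Finset.sum_congr rfl fun x _ => by
              simp only [Matrix.vecMulVec_apply]; ring
    rw [hx]
    refine Submodule.sum_mem _ fun i hi => Submodule.smul_mem _ _ (Submodule.subset_span ?_)
    exact Finset.mem_coe.mpr (Finset.mem_image_of_mem p hi)
  calc (∑ i ∈ I, N i).rank ≤ Module.finrank F (Submodule.span F (↑(I.image p) : Set (n → F))) :=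
        Submodule.finrank_mono hrange
    _ ≤ (I.image p).card := finrank_span_finset_le_card _
    _ ≤ I.card := Finset.card_image_le

lemma card_le_of_hasSliceRankLE {α F : Type*} [Field F] [Fintype α] {m : ℕ}
    (f : α → α → α → F) (hf : ∀ x y z, f x y z = if x = y ∧ x = z then (1 : F) else 0)
    (h : HasSliceRankLE f m) :
    Fintype.card α ≤ m := by
  classical
  obtain ⟨g, hone, hsum⟩ := h
  set P : Fin m → Prop := fun i => ∃ (e : α → F) (q : α → α → F), ∀ x y z, g i x y z = e z * q x y
    with hPdef
  set C : Finset (Fin m) := Finset.univ.filter P with hC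
  let e : Fin m → α → F := fun i => if h : P i then h.choose else 0
  let q : Fin m → α → α → F := fun i => if h : P i then h.choose_spec.choose else 0
  have he : ∀ i ∈ C, ∀ x y z, g i x y z = e i z * q i x y := by
    intro i hi x y z
    have hPi : P i := (Finset.mem_filter.mp hi).2
    simp only [e, q, dif_pos hPi]
    exact hPi.choose_spec.choose_spec x y z
  let Φ : (α → F) →ₗ[F] ({i // i ∈ C} → F) :=
    LinearMap.pi fun i : {i // i ∈ C} =>
      ∑ z : α, (e i z) • (LinearMap.proj z : (α → F) →ₗ[F] F)
  obtain ⟨v, hvmem, hvcard⟩ := exists_large_support (LinearMap.ker Φ)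
  have hvanish : ∀ i ∈ C, ∑ z : α, e i z * v z = 0 := by
    intro i hi
    have h0 := congrFun (LinearMap.mem_ker.mp hvmem) ⟨i, hi⟩
    simpa [Φ, LinearMap.pi_apply, LinearMap.sum_apply, LinearMap.smul_apply,
      LinearMap.proj_apply, smul_eq_mul] using h0
  have hdim : Fintype.card α ≤ finrank F (LinearMap.ker Φ) + C.card := by
    have h1 := LinearMap.finrank_range_add_finrank_ker Φ
    have h2 : finrank F (LinearMap.range Φ) ≤ C.card := by
      have := Submodule.finrank_le (LinearMap.range Φ)
      rwa [Module.finrank_pi, Fintype.card_coe] at this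
    have h3 : finrank F (α → F) = Fintype.card α := Module.finrank_pi F
    omega
  let M : Matrix α α F := Matrix.of fun x y => ∑ z : α, (if x = y ∧ x = z then (1 : F) else 0) * v z
  have hMdiag : M = Matrix.diagonal v := by
    ext x y
    by_cases hxy : x = y
    · subst hxy
      simp [M, Matrix.diagonal_apply_eq, ite_mul, Finset.sum_ite_eq]
    · simp [M, Matrix.diagonal_apply_ne _ hxy, hxy]
  have hMsum : M = ∑ i ∈ Cᶜ, Matrix.of fun x y => ∑ z : α, g i x y z * v z := by
    ext x y
    have step1 : M x y = ∑ i : Fin m, ∑ z : α, g i x y z * v z := by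
      simp only [M, Matrix.of_apply]
      calc ∑ z : α, (if x = y ∧ x = z then (1 : F) else 0) * v z
          = ∑ z : α, ∑ i : Fin m, g i x y z * v z :=
            Finset.sum_congr rfl fun z _ => by rw [← hf x y z, hsum x y z, Finset.sum_mul]
        _ = ∑ i : Fin m, ∑ z : α, g i x y z * v z := Finset.sum_comm
    have step2 : ∀ i ∈ C, ∑ z : α, g i x y z * v z = 0 := by
      intro i hi
      calc ∑ z : α, g i x y z * v z = ∑ z : α, q i x y * (e i z * v z) := by
            refine Finset.sum_congr rfl fun z _ => ?_
            rw [he i hi x y z]; ring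
        _ = q i x y * ∑ z : α, e i z * v z := by rw [Finset.mul_sum]
        _ = 0 := by rw [hvanish i hi, mul_zero]
    rw [Matrix.sum_apply]
    rw [step1, ← Finset.sum_compl_add_sum C (fun i => ∑ z : α, g i x y z * v z)]
    rw [Finset.sum_eq_zero step2, add_zero]
    rfl
  have hrank1 : M.rank ≤ Cᶜ.card := by
    rw [hMsum]
    refine rank_sum_le_card _ _ fun i hi => ?_
    have hiC : i ∉ C := Finset.mem_compl.mp hi
    have hnP : ¬ P i := fun hPi => hiC (Finset.mem_filter.mpr ⟨Finset.mem_univ i, hPi⟩)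
    rcases hone i with ⟨a, b, hab⟩ | ⟨a, b, hab⟩ | hP3
    · exact ⟨a, fun y => ∑ z : α, b y z * v z, by
        ext x y
        simp only [Matrix.of_apply, Matrix.vecMulVec_apply]
        rw [Finset.mul_sum]
        refine Finset.sum_congr rfl fun z _ => ?_
        rw [hab x y z]; ring⟩
    · exact ⟨fun x => ∑ z : α, b x z * v z, a, by
        ext x y
        simp only [Matrix.of_apply, Matrix.vecMulVec_apply]
        rw [Finset.sum_mul]
        refine Finset.sum_congr rfl fun z _ => ?_
        rw [hab x y z]; ring⟩
    · exact absurd hP3 hnP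
  have hrank2 : Fintype.card {i // v i ≠ 0} = M.rank := by
    rw [hMdiag, Matrix.rank_diagonal]
  have hcompl : Cᶜ.card + C.card = m := by
    rw [add_comm, Finset.card_add_card_compl]
    simp
  omega

lemma hasSliceRankLE_diag {α F : Type*} [Field F] [Fintype α]
    (f : α → α → α → F) (hf : ∀ x y z, f x y z = if x = y ∧ x = z then (1 : F) else 0) :
    HasSliceRankLE f (Fintype.card α) := by
  classical
  let eqv := (Fintype.equivFin α).symm
  refine ⟨fun i => fun x y z =>
    (if x = eqv i then (1 : F) else 0) *
      ((if y = eqv i then (1 : F) else 0) * (if z = eqv i then (1 : F) else 0)), fun i => ?_, ?_⟩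
  · exact Or.inl ⟨fun x => if x = eqv i then 1 else 0,
      fun y z => (if y = eqv i then (1 : F) else 0) * (if z = eqv i then (1 : F) else 0),
      fun x y z => rfl⟩
  · intro x y z
    have key : (∑ s : α, (if x = s then (1 : F) else 0) *
        ((if y = s then (1 : F) else 0) * (if z = s then (1 : F) else 0)))
        = (if x = y ∧ x = z then (1 : F) else 0) := by
      rw [Finset.sum_eq_single x]
      · have hiff : (x = y ∧ x = z) ↔ (y = x ∧ z = x) := by
          constructor <;> rintro ⟨h1, h2⟩ <;> exact ⟨h1.symm, h2.symm⟩
        simp only [hiff]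
        by_cases hy : y = x <;> by_cases hz : z = x <;> simp [hy, hz]
      · intro s _ hs
        simp [Ne.symm hs]
      · intro hx
        exact absurd (Finset.mem_univ x) hx
    calc f x y z
        = ∑ s : α, (if x = s then (1 : F) else 0) *
            ((if y = s then (1 : F) else 0) * (if z = s then (1 : F) else 0)) := by
          rw [hf x y z, ← key]
      _ = ∑ i : Fin (Fintype.card α), (if x = eqv i then (1 : F) else 0) *
            ((if y = eqv i then (1 : F) else 0) * (if z = eqv i then (1 : F) else 0)) :=
          (Equiv.sum_comp eqv fun s : α => (if x = s then (1 : F) else 0) *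
            ((if y = s then (1 : F) else 0) * (if z = s then (1 : F) else 0))).symm

/-- The slice rank of the diagonal indicator on `S × S × S` equals `|S|`. -/
theorem sliceRank_diagonal {α F : Type*} [Field F] (S : Finset α) (hS : S.Nonempty) :
    sliceRank (fun x y z : {a // a ∈ S} =>
      if x = y ∧ x = z then (1 : F) else 0) = S.card := by
  classical
  have hcard : Fintype.card {a // a ∈ S} = S.card := Fintype.card_coe S
  unfold sliceRank
  have hmem : S.card ∈ {m | HasSliceRankLE (fun x y z : {a // a ∈ S} =>
      if x = y ∧ x = z then (1 : F) else 0) m} := by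
    rw [Set.mem_setOf_eq, ← hcard]
    exact hasSliceRankLE_diag _ fun x y z => by
      by_cases h : x = y ∧ x = z <;> simp [h]
  refine le_antisymm (Nat.sInf_le hmem) (le_csInf ⟨_, hmem⟩ fun m hm => ?_)
  rw [← hcard]
  exact card_le_of_hasSliceRankLE _ (fun x y z => by
    by_cases h : x = y ∧ x = z <;> simp [h]) hm
end
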